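/- arXiv:1804.03856 — 2 statements merged into one kernel-verified Lean document; each statement's English description precedes it below -/
import Mathlib

section
/- Let N ≥ 1 and ε > 0, and set U_ε := {x ∈ C_N^B : dist(x, ∂C_N^B) > ε}. Then: (a) the map H(x) := (1/x_1, …, 1/x_N) is Lipschitz continuous on U_ε with Lipschitz constant ε^{−2}, i.e. ‖H(x) − H(y)‖ ≤ ε^{−2}·‖x − y‖ for all x, y ∈ U_ε; (b) for every starting point x_0 ∈ U_ε, the curve φ(t, x_0) := (√(2t + x_{0,1}²), …, √(2t + x_{0,N}²)) satisfies φ(0,x_0) = x_0, solves d/dt φ(t,x_0) = H(φ(t,x_0)) for all t ≥ 0, and φ(t, x_0) lies in the interior of C_N^B for all t ≥ 0. -/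
/-!
A point of `U_ε` has every coordinate above `ε`: zeroing its smallest (last) coordinate lands on
`∂C_N^B` at distance `x_N`. Hence `|1/a - 1/b| = |a - b| / (a b) ≤ ε⁻² |a - b|` coordinatewise,
which gives (a). For (b), `d/dt √(2t + c²) = 1 / √(2t + c²)`, and `c ↦ √(2t + c²)` is strictly
increasing on `c > 0`, so the strict ordering of `x₀` is preserved.
-/

open Metric Filter Topology

section Frontier

variable {E : Type*} [AddCommGroup E] [TopologicalSpace E] [IsTopologicalAddGroup E]
  [Module ℝ E] [ContinuousSMul ℝ E]

theorem mem_frontier_of_forall_sub_smul_notMem {s : Set E} {x : E} (v : E) (hx : x ∈ s)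
    (h : ∀ δ > (0 : ℝ), x - δ • v ∉ s) : x ∈ frontier s := by
  refine (mem_frontier_iff_notMem_interior hx).2 fun hint => ?_
  have hlim : Tendsto (fun δ : ℝ => x - δ • v) (𝓝[>] 0) (𝓝 x) := by
    have : Continuous fun δ : ℝ => x - δ • v := by fun_prop
    simpa using (this.tendsto 0).mono_left nhdsWithin_le_nhds
  obtain ⟨δ, hδs, hδ⟩ :=
    ((hlim.eventually (mem_interior_iff_mem_nhds.1 hint)).and self_mem_nhdsWithin).exists
  exact h δ hδ hδs

end Frontier

theorem EuclideanSpace.sub_smul_single_apply {ι : Type*} [DecidableEq ι]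
    (x : EuclideanSpace ℝ ι) (δ : ℝ) (i j : ι) :
    (x - δ • EuclideanSpace.single i (1 : ℝ) : EuclideanSpace ℝ ι) j =
      if j = i then x j - δ else x j := by
  split_ifs with h <;> simp [h]

/-- `C_N^B`, the closed Weyl chamber of type B. -/
def weylChamberB (N : ℕ) : Set (EuclideanSpace ℝ (Fin N)) :=
  {x | (∀ i j : Fin N, i < j → x j ≤ x i) ∧ ∀ i, 0 ≤ x i}

namespace weylChamberB

variable {N : ℕ} {x : EuclideanSpace ℝ (Fin N)}

theorem mem_frontier_of_apply_eq {i j : Fin N} (hx : x ∈ weylChamberB N) (hij : i < j)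
    (h : x i = x j) : x ∈ frontier (weylChamberB N) := by
  refine mem_frontier_of_forall_sub_smul_notMem (EuclideanSpace.single i 1) hx fun δ hδ hmem => ?_
  have := hmem.1 i j hij
  simp only [EuclideanSpace.sub_smul_single_apply, ↓reduceIte, if_neg hij.ne', h] at this
  linarith

theorem mem_frontier_of_apply_eq_zero {i : Fin N} (hx : x ∈ weylChamberB N) (h : x i = 0) :
    x ∈ frontier (weylChamberB N) := by
  refine mem_frontier_of_forall_sub_smul_notMem (EuclideanSpace.single i 1) hx fun δ hδ hmem => ?_
  have := hmem.2 i
  simp only [EuclideanSpace.sub_smul_single_apply, ↓reduceIte, h] at this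
  linarith

theorem apply_lt_apply_and_pos_of_mem_interior (hx : x ∈ interior (weylChamberB N)) :
    (∀ i j : Fin N, i < j → x j < x i) ∧ ∀ i, 0 < x i := by
  have hxC := interior_subset hx
  have hfr : x ∉ frontier (weylChamberB N) := (mem_interior_iff_notMem_frontier hxC).1 hx
  refine ⟨fun i j hij => (hxC.1 i j hij).lt_of_ne fun h => hfr ?_, fun i => (hxC.2 i).lt_of_ne' ?_⟩
  · exact mem_frontier_of_apply_eq hxC hij h.symm
  · exact fun h => hfr (mem_frontier_of_apply_eq_zero hxC h)

theorem infDist_frontier_le_apply (hx : x ∈ weylChamberB N) (i : Fin N) :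
    infDist x (frontier (weylChamberB N)) ≤ x i := by
  obtain ⟨n, rfl⟩ := Nat.exists_eq_succ_of_ne_zero i.pos.ne'
  set z := x - x (Fin.last n) • EuclideanSpace.single (Fin.last n) 1
  have hz : z ∈ weylChamberB (n + 1) := by
    refine ⟨fun j k hjk => ?_, fun j => ?_⟩
    · simp only [z, EuclideanSpace.sub_smul_single_apply, if_neg (Fin.ne_last_of_lt hjk)]
      split_ifs with hk
      · rw [hk, sub_self]
        exact hx.2 j
      · exact hx.1 j k hjk
    · simp only [z, EuclideanSpace.sub_smul_single_apply]
      split_ifs with h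
      · simp [h]
      · exact hx.2 j
  have hz_last : z (Fin.last n) = 0 := by simp [z]
  calc infDist x (frontier (weylChamberB (n + 1)))
      ≤ dist x z := infDist_le_dist_of_mem (mem_frontier_of_apply_eq_zero hz hz_last)
    _ = x (Fin.last n) := by
      simp [z, norm_smul, abs_of_nonneg (hx.2 _)]
    _ ≤ x i := by
      rcases (Fin.le_last i).lt_or_eq with h | h
      · exact hx.1 i _ h
      · rw [h]

theorem lt_apply_of_lt_infDist_frontier {ε : ℝ} (hx : x ∈ weylChamberB N)
    (hε : ε < infDist x (frontier (weylChamberB N))) (i : Fin N) : ε < x i :=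
  hε.trans_le (infDist_frontier_le_apply hx i)

end weylChamberB

theorem abs_inv_sub_inv_le {a b ε : ℝ} (hε : 0 < ε) (ha : ε ≤ a) (hb : ε ≤ b) :
    |a⁻¹ - b⁻¹| ≤ (ε ^ 2)⁻¹ * |a - b| := by
  have ha0 : 0 < a := hε.trans_le ha
  have hb0 : 0 < b := hε.trans_le hb
  calc |a⁻¹ - b⁻¹| = (a * b)⁻¹ * |a - b| := by
        rw [inv_sub_inv ha0.ne' hb0.ne', abs_div, abs_sub_comm, abs_of_pos (mul_pos ha0 hb0),
          div_eq_inv_mul]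
    _ ≤ (ε ^ 2)⁻¹ * |a - b| := by
        gcongr
        rw [sq]
        exact mul_le_mul ha hb hε.le ha0.le

theorem EuclideanSpace.norm_le_mul_norm_of_abs_apply_le {ι : Type*} [Fintype ι]
    {u v : EuclideanSpace ℝ ι} {c : ℝ} (hc : 0 ≤ c) (h : ∀ i, |u i| ≤ c * |v i|) :
    ‖u‖ ≤ c * ‖v‖ := by
  refine (pow_le_pow_iff_left₀ (norm_nonneg u) (by positivity) two_ne_zero).1 ?_
  rw [mul_pow, EuclideanSpace.real_norm_sq_eq, EuclideanSpace.real_norm_sq_eq, Finset.mul_sum]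
  refine Finset.sum_le_sum fun i _ => ?_
  calc u i ^ 2 = |u i| ^ 2 := (sq_abs _).symm
    _ ≤ (c * |v i|) ^ 2 := pow_le_pow_left₀ (abs_nonneg _) (h i) 2
    _ = c ^ 2 * v i ^ 2 := by rw [mul_pow, sq_abs]

theorem EuclideanSpace.hasDerivAt_of_forall_apply {ι : Type*} [Fintype ι]
    {f : ℝ → EuclideanSpace ℝ ι} {f' : EuclideanSpace ℝ ι} {t : ℝ}
    (h : ∀ i, HasDerivAt (fun s => f s i) (f' i) t) : HasDerivAt f f' t :=
  (PiLp.hasFDerivAt_toLp (𝕜 := ℝ) 2 fun i => f t i).comp_hasDerivAt (f := fun s i => f s i) t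
    (hasDerivAt_pi.2 h)

theorem hasDerivAt_sqrt_two_mul_add {c t : ℝ} (h : 0 < 2 * t + c) :
    HasDerivAt (fun s => √(2 * s + c)) (√(2 * t + c))⁻¹ t := by
  have hlin : HasDerivAt (fun s : ℝ => 2 * s + c) 2 t := by
    simpa using ((hasDerivAt_id t).const_mul 2).add_const c
  have hsqrt : √(2 * t + c) ≠ 0 := (Real.sqrt_pos.2 h).ne'
  exact (hlin.sqrt h.ne').congr_deriv (by field_simp)

theorem lipschitz_and_explicit_solution_B2_general (N : ℕ) (ε : ℝ) (hε : 0 < ε)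
    (C U : Set (EuclideanSpace ℝ (Fin N)))
    (hC : C = {x | (∀ i j : Fin N, i < j → x j ≤ x i) ∧ ∀ i, 0 ≤ x i})
    (hU : U = {x ∈ C | ε < Metric.infDist x (frontier C)})
    (H : EuclideanSpace ℝ (Fin N) → EuclideanSpace ℝ (Fin N))
    (hH : ∀ x, ∀ i : Fin N, H x i = 1 / x i) :
    (∀ x ∈ U, ∀ y ∈ U, ‖H x - H y‖ ≤ (ε ^ 2)⁻¹ * ‖x - y‖)
      ∧ ∀ x₀ ∈ U, ∀ φ : ℝ → EuclideanSpace ℝ (Fin N),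
          (∀ t, ∀ i : Fin N, φ t i = Real.sqrt (2 * t + x₀ i ^ 2)) →
          (φ 0 = x₀
            ∧ (∀ t ≥ (0:ℝ), HasDerivAt φ (H (φ t)) t)
            ∧ (∀ t ≥ (0:ℝ), (∀ i j : Fin N, i < j → φ t j < φ t i) ∧ ∀ i, 0 < φ t i)) := by
  have hC' : C = weylChamberB N := hC
  subst hC' hU
  refine ⟨fun x hx y hy => ?_, fun x₀ hx₀ φ hφ => ?_⟩
  · refine EuclideanSpace.norm_le_mul_norm_of_abs_apply_le (by positivity) fun i => ?_
    simpa only [PiLp.sub_apply, hH, one_div] using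
      abs_inv_sub_inv_le hε (weylChamberB.lt_apply_of_lt_infDist_frontier hx.1 hx.2 i).le
        (weylChamberB.lt_apply_of_lt_infDist_frontier hy.1 hy.2 i).le
  have hx₀ : x₀ ∈ interior (weylChamberB N) :=
    (mem_interior_iff_notMem_frontier hx₀.1).2 fun h => by
      linarith [infDist_zero_of_mem h, hx₀.2]
  obtain ⟨hx₀_lt, hx₀_pos⟩ := weylChamberB.apply_lt_apply_and_pos_of_mem_interior hx₀
  have harg : ∀ t ≥ (0 : ℝ), ∀ i, 0 < 2 * t + x₀ i ^ 2 := fun t ht i => by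
    have := hx₀_pos i
    positivity
  refine ⟨?_, fun t ht => ?_, fun t ht => ⟨fun i j hij => ?_, fun i => ?_⟩⟩
  · ext i
    rw [hφ, mul_zero, zero_add, Real.sqrt_sq (hx₀_pos i).le]
  · refine EuclideanSpace.hasDerivAt_of_forall_apply fun i => ?_
    simpa only [hφ, hH, one_div] using hasDerivAt_sqrt_two_mul_add (harg t ht i)
  · rw [hφ, hφ]
    gcongr
    exacts [(hx₀_pos j).le, hx₀_lt i j hij]
  · rw [hφ]
    exact Real.sqrt_pos.2 (harg t ht i)

/-- For `N ≥ 1`, `ε > 0` and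
`U_ε = {x ∈ C_N^B : dist(x, ∂C_N^B) > ε}`:
(a) the map `H(x) = (1/x_1, …, 1/x_N)` is Lipschitz on `U_ε` with constant `ε⁻²`;
(b) for every `x₀ ∈ U_ε` the curve `φ(t,x₀) = (√(2t + x₀ᵢ²))ᵢ` starts at `x₀`, solves
`φ' = H(φ)` for `t ≥ 0`, and lies in the interior `{x : x_1 > ⋯ > x_N > 0}` of `C_N^B`
for all `t ≥ 0`. -/
theorem lipschitz_and_explicit_solution_B2 (N : ℕ) (hN : 1 ≤ N) (ε : ℝ) (hε : 0 < ε)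
    (C U : Set (EuclideanSpace ℝ (Fin N)))
    (hC : C = {x | (∀ i j : Fin N, i < j → x j ≤ x i) ∧ ∀ i, 0 ≤ x i})
    (hU : U = {x ∈ C | ε < Metric.infDist x (frontier C)})
    (H : EuclideanSpace ℝ (Fin N) → EuclideanSpace ℝ (Fin N))
    (hH : ∀ x, ∀ i : Fin N, H x i = 1 / x i) :
    (∀ x ∈ U, ∀ y ∈ U, ‖H x - H y‖ ≤ (ε ^ 2)⁻¹ * ‖x - y‖)
      ∧ ∀ x₀ ∈ U, ∀ φ : ℝ → EuclideanSpace ℝ (Fin N),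
          (∀ t, ∀ i : Fin N, φ t i = Real.sqrt (2 * t + x₀ i ^ 2)) →
          (φ 0 = x₀
            ∧ (∀ t ≥ (0:ℝ), HasDerivAt φ (H (φ t)) t)
            ∧ (∀ t ≥ (0:ℝ), (∀ i j : Fin N, i < j → φ t j < φ t i) ∧ ∀ i, 0 < φ t i)) :=
  lipschitz_and_explicit_solution_B2_general N ε hε C U hC hU H hH
end

section
/- Let N ≥ 2 and let y ∈ ℝ^N with y_1 > … > y_{N−1} > |y_N|. Define W_D(x) := 2 Σ_{1 ≤ i < j ≤ N} ln(x_i² − x_j²) − ‖x‖²/2 on the interior {x ∈ ℝ^N : x_1 > … > x_{N−1} > |x_N|} of C_N^D. Then W_D(x) ≤ W_D(y) for all x in this interior (i.e. W_D is maximal at y) if and only if y_N = 0 and 4 Σ_{j ≠ i} 1/(y_i² − y_j²) = 1 for every i = 1,…,N−1. -/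
/-!
In the squared coordinates `u i = x i ^ 2` the function `W_D` becomes
`logGas u = 2 ∑_{i<j} ln (u i - u j) - ∑ u i / 2`, which is concave on strictly decreasing
`u`, with partial derivatives `logGasGrad u i = 2 ∑_{j ≠ i} 1 / (u i - u j) - 1 / 2`.
At an interior maximum `y` the derivative in `x k`, namely `2 y k · logGasGrad (y²) k`, vanishes.
For `k < N` we have `y k > 0`, which gives the stationarity equations; for the last coordinate
`u N` is the smallest, so `logGasGrad (y²) N < 0` and hence `y N = 0`. Conversely, concavity
bounds `W_D x - W_D y` by `∑ (x i² - y i²) · logGasGrad (y²) i`, whose terms vanish for `i < N`,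
while the last one is `x N² · logGasGrad (y²) N ≤ 0`.
-/

open Finset

section LogGas

variable {ι : Type*} [Fintype ι] [LinearOrder ι]

theorem Finset.sum_filter_lt_add_swap {M : Type*} [AddCommMonoid M] (g : ι × ι → M) :
    ∑ p ∈ univ.filter (fun p : ι × ι => p.1 < p.2), (g p + g p.swap)
      = ∑ i, ∑ j ∈ univ.erase i, g (i, j) := by
  have hsplit : ∀ i j : ι, (if j ≠ i then g (i, j) else 0)
      = (if i < j then g (i, j) else 0) + (if j < i then g (i, j) else 0) := by
    intro i j
    rcases lt_trichotomy i j with h | rfl | h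
    · simp [h, h.ne', not_lt_of_gt h]
    · simp
    · simp [h, h.ne, not_lt_of_gt h]
  simp only [sum_filter, ← filter_ne', Fintype.sum_prod_type, hsplit, sum_add_distrib,
    Prod.swap]
  rw [sum_comm (f := fun i j => if j < i then g (i, j) else 0)]

theorem sum_filter_lt_sub_div_sub (v d : ι → ℝ) (hd : Function.Injective d) :
    ∑ p ∈ univ.filter (fun p : ι × ι => p.1 < p.2), (v p.1 - v p.2) / (d p.1 - d p.2)
      = ∑ i, v i * ∑ j ∈ univ.erase i, 1 / (d i - d j) := by
  have hswap : ∀ p ∈ univ.filter (fun p : ι × ι => p.1 < p.2),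
      (v p.1 - v p.2) / (d p.1 - d p.2)
        = v p.1 / (d p.1 - d p.2) + v p.swap.1 / (d p.swap.1 - d p.swap.2) := by
    intro p hp
    have hne : d p.1 - d p.2 ≠ 0 := sub_ne_zero.2 (hd.ne (mem_filter.1 hp).2.ne)
    rw [Prod.fst_swap, Prod.snd_swap, ← neg_sub (d p.1), div_neg]
    field_simp
    ring
  rw [sum_congr rfl hswap, Finset.sum_filter_lt_add_swap (fun p => v p.1 / (d p.1 - d p.2))]
  simp only [mul_sum, mul_one_div]

noncomputable def logGas (u : ι → ℝ) : ℝ :=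
  2 * ∑ p ∈ univ.filter (fun p : ι × ι => p.1 < p.2), Real.log (u p.1 - u p.2)
    - (∑ i, u i) / 2

noncomputable def logGasGrad (u : ι → ℝ) (i : ι) : ℝ :=
  2 * ∑ j ∈ univ.erase i, 1 / (u i - u j) - 1 / 2

theorem logGas_le_add_sum_mul_logGasGrad {u d : ι → ℝ} (hu : StrictAnti u)
    (hd : StrictAnti d) :
    logGas u ≤ logGas d + ∑ i, (u i - d i) * logGasGrad d i := by
  have htangent : ∀ p ∈ univ.filter (fun p : ι × ι => p.1 < p.2),
      Real.log (u p.1 - u p.2) ≤ Real.log (d p.1 - d p.2)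
        + ((u - d) p.1 - (u - d) p.2) / (d p.1 - d p.2) := by
    intro p hp
    have hlt := (mem_filter.1 hp).2
    have ha : 0 < d p.1 - d p.2 := sub_pos.2 (hd hlt)
    have hb : 0 < u p.1 - u p.2 := sub_pos.2 (hu hlt)
    have := Real.log_le_sub_one_of_pos (div_pos hb ha)
    rw [Real.log_div hb.ne' ha.ne'] at this
    have hrw : ((u - d) p.1 - (u - d) p.2) / (d p.1 - d p.2)
        = (u p.1 - u p.2) / (d p.1 - d p.2) - 1 := by
      field_simp
      simp only [Pi.sub_apply]
      ring
    linarith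
  have hsum := sum_le_sum htangent
  rw [sum_add_distrib, sum_filter_lt_sub_div_sub _ _ hd.injective] at hsum
  have hlin : ∑ i, (u i - d i) * logGasGrad d i
      = 2 * ∑ i, (u - d) i * ∑ j ∈ univ.erase i, 1 / (d i - d j)
        - ((∑ i, u i) - ∑ i, d i) / 2 := by
    simp only [logGasGrad, Pi.sub_apply, mul_sub, sum_sub_distrib, ← sum_mul, mul_sum]
    ring_nf
  unfold logGas
  rw [hlin]
  linarith

theorem HasDerivAt.logGas {u : ℝ → ι → ℝ} {u' : ι → ℝ} {t : ℝ}
    (hu : ∀ i, HasDerivAt (fun s => u s i) (u' i) t) (hinj : Function.Injective (u t)) :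
    HasDerivAt (fun s => logGas (u s)) (∑ i, u' i * logGasGrad (u t) i) t := by
  have hlog : ∀ p ∈ univ.filter (fun p : ι × ι => p.1 < p.2),
      HasDerivAt (fun s => Real.log (u s p.1 - u s p.2))
        ((u' p.1 - u' p.2) / (u t p.1 - u t p.2)) t :=
    fun p hp => ((hu p.1).sub (hu p.2)).log
      (sub_ne_zero.2 (hinj.ne (mem_filter.1 hp).2.ne))
  have hderiv := ((HasDerivAt.fun_sum hlog).const_mul 2).fun_sub
    ((HasDerivAt.fun_sum (u := univ) fun i _ => hu i).div_const 2)
  rw [sum_filter_lt_sub_div_sub _ _ hinj] at hderiv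
  have hvalue : ∑ i, u' i * logGasGrad (u t) i
      = 2 * ∑ i, u' i * ∑ j ∈ univ.erase i, 1 / (u t i - u t j) - (∑ i, u' i) / 2 := by
    simp only [logGasGrad, mul_sub, sum_sub_distrib, ← sum_mul, mul_sum]
    ring_nf
  rw [hvalue]
  exact hderiv

theorem logGasGrad_neg_of_isTop {u : ι → ℝ} (hu : StrictAnti u) {i : ι} (hi : IsTop i) :
    logGasGrad u i < 0 := by
  have hnonpos : ∑ j ∈ univ.erase i, 1 / (u i - u j) ≤ 0 :=
    sum_nonpos fun j hj => one_div_nonpos.2 <|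
      sub_nonpos.2 (hu ((hi j).lt_of_ne (ne_of_mem_erase hj))).le
  unfold logGasGrad
  linarith

theorem mul_logGasGrad_sq_eq_zero_of_isLocalMax {y : ι → ℝ}
    (hmax : IsLocalMax (fun x : ι → ℝ => logGas (fun i => x i ^ 2)) y)
    (hinj : Function.Injective (fun i => y i ^ 2)) (k : ι) :
    y k * logGasGrad (fun i => y i ^ 2) k = 0 := by
  set e : ι → ℝ := Pi.single k 1
  have hline : IsLocalMax (fun s : ℝ => logGas (fun i => (y i + s * e i) ^ 2)) 0 := by
    have hcont : ContinuousAt (fun s : ℝ => y + s • e) 0 := by fun_prop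
    have hmax' : IsLocalMax (fun x : ι → ℝ => logGas (fun i => x i ^ 2)) (y + (0 : ℝ) • e) := by
      simpa using hmax
    exact IsLocalMax.comp_continuous (g := fun s : ℝ => y + s • e) (b := 0) hmax' hcont
  have hcoord : ∀ i, HasDerivAt (fun s : ℝ => (y i + s * e i) ^ 2) (2 * y i * e i) 0 := by
    intro i
    exact ((((hasDerivAt_id' (0 : ℝ)).mul_const (e i)).const_add (y i)).fun_pow 2).congr_deriv
      (by push_cast; ring)
  have hderiv := HasDerivAt.logGas hcoord (by simpa using hinj)
  have hzero := hline.hasDerivAt_eq_zero hderiv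
  rw [Fintype.sum_eq_single k fun i hi => by simp [e, hi]] at hzero
  simpa [e] using hzero

end LogGas

section WeylChamber

variable {N : ℕ}

/-- Indices are `0`-based: coordinate `N - 1` is the paper's `x_N`. -/
def weylChamberDInterior (hN : 1 < N) : Set (Fin N → ℝ) :=
  {x | (∀ i j : Fin N, i < j → j.val + 1 < N → x j < x i)
    ∧ |x ⟨N - 1, by omega⟩| < x ⟨N - 2, by omega⟩}

theorem isOpen_weylChamberDInterior (hN : 1 < N) : IsOpen (weylChamberDInterior hN) := by
  simp only [weylChamberDInterior, Set.ofPred_and, Set.ofPred_forall]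
  exact (isOpen_iInter_of_finite fun i => isOpen_iInter_of_finite fun j =>
    isOpen_iInter_of_finite fun _ => isOpen_iInter_of_finite fun _ =>
      isOpen_lt (continuous_apply j) (continuous_apply i)).inter
    (isOpen_lt (continuous_apply _).abs (continuous_apply _))

variable {hN : 1 < N} {x : Fin N → ℝ}

theorem abs_last_lt_of_mem_weylChamberDInterior (hx : x ∈ weylChamberDInterior hN)
    {i : Fin N} (hi : i.val + 1 < N) : |x ⟨N - 1, by omega⟩| < x i := by
  obtain ⟨hanti, hlast⟩ := hx
  rcases (show i.val ≤ N - 2 by omega).eq_or_lt with h | h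
  · rwa [show i = ⟨N - 2, by omega⟩ from Fin.ext h]
  · exact hlast.trans (hanti i _ (Fin.lt_def.2 h) (by simp only; omega))

theorem pos_of_mem_weylChamberDInterior (hx : x ∈ weylChamberDInterior hN)
    {i : Fin N} (hi : i.val + 1 < N) : 0 < x i :=
  (abs_nonneg _).trans_lt (abs_last_lt_of_mem_weylChamberDInterior hx hi)

theorem strictAnti_sq_of_mem_weylChamberDInterior (hx : x ∈ weylChamberDInterior hN) :
    StrictAnti (fun i => x i ^ 2) := by
  intro i j hij
  have hi : i.val + 1 < N := by have := Fin.lt_def.1 hij; omega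
  rw [sq_lt_sq, abs_of_pos (pos_of_mem_weylChamberDInterior hx hi)]
  by_cases hj : j.val + 1 < N
  · rw [abs_of_pos (pos_of_mem_weylChamberDInterior hx hj)]
    exact hx.1 i j hij hj
  · rw [show j = ⟨N - 1, by omega⟩ from Fin.ext (by show j.val = N - 1; omega)]
    exact abs_last_lt_of_mem_weylChamberDInterior hx hi

end WeylChamber

/-- For `N ≥ 2` and `y` in the interior
`{x : x_1 > ⋯ > x_{N−1} > |x_N|}` of the Weyl chamber of type `D`, the function
`W_D(x) = 2 ∑_{i<j} ln(x_i² − x_j²) − ‖x‖²/2` is maximal at `y` (among points of the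
interior) if and only if `y_N = 0` and `4 ∑_{j ≠ i} 1/(y_i² − y_j²) = 1` for every
`i = 1, …, N−1`. -/
theorem WD_max_iff_stationary (N : ℕ) (hN : 2 ≤ N)
    (y : EuclideanSpace ℝ (Fin N))
    (hy : (∀ i j : Fin N, i < j → j.val + 1 < N → y j < y i)
      ∧ |y ⟨N - 1, by omega⟩| < y ⟨N - 2, by omega⟩)
    (W : EuclideanSpace ℝ (Fin N) → ℝ)
    (hW : ∀ x, W x = 2 * (∑ p ∈ Finset.univ.filter (fun p : Fin N × Fin N => p.1 < p.2),
        Real.log (x p.1 ^ 2 - x p.2 ^ 2)) - ‖x‖ ^ 2 / 2) :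
    (∀ x : EuclideanSpace ℝ (Fin N),
        ((∀ i j : Fin N, i < j → j.val + 1 < N → x j < x i)
          ∧ |x ⟨N - 1, by omega⟩| < x ⟨N - 2, by omega⟩) → W x ≤ W y)
      ↔ (y ⟨N - 1, by omega⟩ = 0
          ∧ ∀ i : Fin N, i.val + 1 < N →
              4 * (∑ j ∈ Finset.univ.erase i, 1 / (y i ^ 2 - y j ^ 2)) = 1) := by
  have hW_sq : ∀ x, W x = logGas (fun i => x i ^ 2) := fun x => by
    rw [hW, EuclideanSpace.real_norm_sq_eq]
    rfl
  have hy_mem : ⇑y ∈ weylChamberDInterior hN := hy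
  have hy_sq : StrictAnti (fun i => y i ^ 2) := strictAnti_sq_of_mem_weylChamberDInterior hy_mem
  have hlast : IsTop (⟨N - 1, by omega⟩ : Fin N) := fun i =>
    Fin.le_def.2 (by show i.val ≤ N - 1; omega)
  have hgrad_neg := logGasGrad_neg_of_isTop hy_sq hlast
  have hgrad_eq_zero : ∀ i, logGasGrad (fun i => y i ^ 2) i = 0 ↔
      4 * (∑ j ∈ Finset.univ.erase i, 1 / (y i ^ 2 - y j ^ 2)) = 1 := fun i => by
    unfold logGasGrad
    constructor <;> intro h <;> linarith
  constructor
  · intro hmax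
    have hloc : IsLocalMax (fun x : Fin N → ℝ => logGas (fun i => x i ^ 2)) y :=
      Filter.eventually_of_mem ((isOpen_weylChamberDInterior hN).mem_nhds hy_mem) fun x hx => by
        simpa only [hW_sq] using hmax (WithLp.toLp 2 x) hx
    have hcrit := mul_logGasGrad_sq_eq_zero_of_isLocalMax hloc hy_sq.injective
    refine ⟨(mul_eq_zero.1 (hcrit _)).resolve_right hgrad_neg.ne, fun i hi => ?_⟩
    exact (hgrad_eq_zero i).1 ((mul_eq_zero.1 (hcrit i)).resolve_left
      (pos_of_mem_weylChamberDInterior hy_mem hi).ne')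
  · rintro ⟨hy_last, hstat⟩ x hx
    rw [hW_sq, hW_sq]
    refine (logGas_le_add_sum_mul_logGasGrad
      (strictAnti_sq_of_mem_weylChamberDInterior (hN := hN) hx) hy_sq).trans
        (add_le_of_nonpos_right (sum_nonpos fun i _ => ?_))
    by_cases hi : i.val + 1 < N
    · rw [(hgrad_eq_zero i).2 (hstat i hi), mul_zero]
    · rw [show i = ⟨N - 1, by omega⟩ from Fin.ext (by show i.val = N - 1; omega)]
      exact mul_nonpos_of_nonneg_of_nonpos (by simp [hy_last, sq_nonneg]) hgrad_neg.le
end
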